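/- Let n ≥ 1 and a, b : {1,…,n} → ℕ, and for a vector v write |v_{>i}| = Σ_{j>i} v_j and |v| = Σ_j v_j. Then for every integer t: ∏_{i=1}^{n} ( t − |a_{>i}| − |b_{>i}| )_{b_i} = Σ_{p} (−1)^{|p|} ( ∏_{i=1}^{n−1} C(b_i, p_i) · ( |a_{>i}| + |p_{>i}| )^{(p_i)} ) · (t)_{|b| − |p|}, where the sum runs over all p : {1,…,n−1} → ℕ with p_i ≤ b_i for each i, (x)_r = x(x−1)⋯(x−r+1) is the falling factorial, x^{(r)} = x(x+1)⋯(x+r−1) is the rising factorial, and C is the binomial coefficient. -/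

import Mathlib

/-!
Induct on `n`, splitting off the factor `i = 0`. With `s = |a_{>0}| + |p_{>0}|` and
`m = |b_{>0}| - |p_{>0}|` that factor reads `(t - s - m)_{b_0}`, and it is absorbed by the
one-step identity `(t - s - m)_c (t)_m = Σ_k (-1)^k C(c,k) s^{(k)} (t)_{m+c-k}`: this is
Chu–Vandermonde for `(x + y)_c` with `x = t - m`, `y = -s`, together with
`(-s)_k = (-1)^k s^{(k)}` and `(t)_m (t - m)_j = (t)_{m+j}`.
-/

open Finset

/-- The falling factorial `(x)_r = x(x-1)⋯(x-r+1)` of an integer `x`, with `(x)_0 = 1`. -/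
noncomputable def fallInt (x : ℤ) (r : ℕ) : ℤ := (descPochhammer ℤ r).eval x

/-- `|v_{>i}| = Σ_{j > i} v_j`. -/
def gtSum {N : ℕ} (v : Fin N → ℕ) (i : Fin N) : ℕ :=
  ∑ j ∈ Finset.univ.filter (fun j : Fin N => i < j), v j

open Polynomial in
theorem fallInt_add (x y : ℤ) (c : ℕ) :
    fallInt (x + y) c =
      ∑ ij ∈ antidiagonal c, (c.choose ij.1 : ℤ) * fallInt x ij.1 * fallInt y ij.2 := by
  simp only [fallInt, eval_eq_smeval, Ring.descPochhammer_smeval_add c (Commute.all x y), mul_assoc]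

theorem fallInt_neg_natCast (s k : ℕ) :
    fallInt (-(s : ℤ)) k = (-1) ^ k * (s.ascFactorial k : ℤ) := by
  have h := ascPochhammer_eval_neg_eq_descPochhammer ℤ (-(s : ℤ)) k
  rw [neg_neg, ← Nat.cast_id s, ← ascPochhammer_eval_cast, ascPochhammer_nat_eq_ascFactorial,
    Nat.cast_id] at h
  rw [h, fallInt, ← mul_assoc, ← mul_pow]
  simp

open Polynomial in
theorem fallInt_mul_fallInt_sub (t : ℤ) (m k : ℕ) :
    fallInt t m * fallInt (t - m) k = fallInt t (m + k) := by
  simp only [fallInt, ← descPochhammer_mul, eval_mul, eval_comp, eval_sub, eval_X, eval_natCast]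

theorem fallInt_sub_sub_mul_fallInt (t : ℤ) (s m c : ℕ) :
    fallInt (t - s - m) c * fallInt t m =
      ∑ k ∈ range (c + 1),
        (-1) ^ k * (c.choose k : ℤ) * (s.ascFactorial k : ℤ) * fallInt t (m + (c - k)) := by
  rw [show t - s - m = -(s : ℤ) + (t - m) by ring, fallInt_add, sum_mul,
    Nat.sum_antidiagonal_eq_sum_range_succ_mk]
  refine sum_congr rfl fun k _ => ?_
  rw [fallInt_neg_natCast, ← fallInt_mul_fallInt_sub]
  ring

lemma gtSum_zero {N : ℕ} (v : Fin (N + 1) → ℕ) : gtSum v 0 = ∑ j : Fin N, v j.succ := by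
  simp [gtSum, sum_filter, Fin.sum_univ_succ, Fin.succ_pos]

lemma gtSum_succ {N : ℕ} (v : Fin (N + 1) → ℕ) (i : Fin N) :
    gtSum v i.succ = gtSum (fun j => v j.succ) i := by
  simp [gtSum, sum_filter, Fin.sum_univ_succ, Fin.succ_lt_succ_iff]

lemma sum_val_le_sum {N : ℕ} (v : Fin (N + 1) → ℕ) (p : (i : Fin N) → Fin (v i.castSucc + 1)) :
    ∑ i, (p i : ℕ) ≤ ∑ i, v i := by
  rw [Fin.sum_univ_castSucc]
  exact (sum_le_sum fun i _ => Fin.is_le (p i)).trans (Nat.le_add_right _ _)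

section
variable {n : ℕ}

/-- The summand of the `M`-Weyl normal coordinate `N_M(A, |p|)` indexed by `p`, signed by
`(-1)^{|p|}`. -/
def normalCoordTerm (a b : Fin (n + 1) → ℕ) (p : (i : Fin n) → Fin (b i.castSucc + 1)) : ℤ :=
  (-1) ^ (∑ i, (p i : ℕ)) *
    ∏ i : Fin n, ((b i.castSucc).choose (p i) : ℤ) *
      ((gtSum a i.castSucc + gtSum (fun j => (p j : ℕ)) i).ascFactorial (p i) : ℤ)

lemma normalCoordTerm_eq_mul_tail (a b : Fin (n + 2) → ℕ)
    (p : (i : Fin (n + 1)) → Fin (b i.castSucc + 1)) :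
    normalCoordTerm a b p =
      (-1) ^ (p 0 : ℕ) * ((b 0).choose (p 0) : ℤ) *
        ((gtSum a 0 + ∑ i, (Fin.tail p i : ℕ)).ascFactorial (p 0) : ℤ) *
        normalCoordTerm (fun j => a j.succ) (fun j => b j.succ) (Fin.tail p) := by
  simp only [normalCoordTerm, Fin.sum_univ_succ (f := fun i => (p i : ℕ)), Fin.prod_univ_succ,
    gtSum_zero (fun i => (p i : ℕ)), gtSum_succ, Fin.castSucc_zero, ← Fin.succ_castSucc, Fin.tail]
  ring

theorem prod_fallInt_eq_sum_normalCoordTerm (a b : Fin (n + 1) → ℕ) (t : ℤ) :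
    ∏ i, fallInt (t - gtSum a i - gtSum b i) (b i) =
      ∑ p : (i : Fin n) → Fin (b i.castSucc + 1),
        normalCoordTerm a b p * fallInt t ((∑ i, b i) - ∑ i, (p i : ℕ)) := by
  induction n with
  | zero => simp [normalCoordTerm, gtSum_zero]
  | succ n ih =>
    have hb_sum : ∑ i, b i = b 0 + gtSum b 0 := by rw [Fin.sum_univ_succ, gtSum_zero]
    have hb_tail : ∑ i : Fin (n + 1), b i.succ = gtSum b 0 := (gtSum_zero b).symm
    rw [Fin.prod_univ_succ]
    simp only [gtSum_succ]
    rw [ih (fun j => a j.succ) (fun j => b j.succ), mul_sum]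
    simp only [hb_sum, hb_tail, normalCoordTerm_eq_mul_tail, Fin.sum_univ_succ]
    rw [← (Fin.consEquiv _).sum_comp, Fintype.sum_prod_type, sum_comm]
    refine sum_congr rfl fun p _ => ?_
    simp only [Fin.consEquiv, Equiv.coe_fn_mk, Fin.cons_zero, Fin.cons_succ, Fin.tail_cons]
    set P := ∑ i, (p i : ℕ)
    have hP : P ≤ gtSum b 0 := hb_tail ▸ sum_val_le_sum (fun j => b j.succ) p
    have hshift : t - gtSum a 0 - gtSum b 0 = t - ↑(gtSum a 0 + P) - ↑(gtSum b 0 - P) := by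
      push_cast [Nat.cast_sub hP]
      ring
    rw [hshift, mul_left_comm, fallInt_sub_sub_mul_fallInt, mul_sum, ← Fin.sum_univ_eq_sum_range]
    refine sum_congr rfl fun x _ => ?_
    have hx := Fin.is_le x
    rw [show gtSum b 0 - P + (b 0 - x) = b 0 + gtSum b 0 - (x + P) by omega]
    ring

end

/-- The identity obtained by evaluating the normal-form expansion
`∏_{i=1}^n x^{a_i} y^{b_i} = Σ_k N_M(A,k) x^{|a|+k} y^{|b|-k} ℏ^k` in the `M`-Weyl algebra
on `x^t`: for all `a, b : Fin (n+1) → ℕ` and every `t : ℤ`,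
`∏_i (t - |a_{>i}| - |b_{>i}|)_{b_i}` equals
`Σ_p (-1)^{|p|} (∏_i C(b_i,p_i) (|a_{>i}| + |p_{>i}|)^{(p_i)}) (t)_{|b|-|p|}`,
summed over `p` on the first `n` indices with `p_i ≤ b_i`; `x^{(r)}` is the rising
factorial `x(x+1)⋯(x+r-1)`. -/
theorem statement11 (n : ℕ) (a b : Fin (n + 1) → ℕ) (t : ℤ) :
    ∏ i : Fin (n + 1), fallInt (t - (gtSum a i : ℤ) - (gtSum b i : ℤ)) (b i) =
      ∑ p : (i : Fin n) → Fin (b i.castSucc + 1),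
        (-1 : ℤ) ^ (∑ i : Fin n, (p i : ℕ)) *
          (∏ i : Fin n,
            ((b i.castSucc).choose (p i) : ℤ) *
              (((gtSum a i.castSucc +
                  ∑ j ∈ Finset.univ.filter (fun j : Fin n => i < j), ((p j : ℕ))).ascFactorial
                  (p i) : ℕ) : ℤ)) *
          fallInt t ((∑ i : Fin (n + 1), b i) - ∑ i : Fin n, (p i : ℕ)) :=
  prod_fallInt_eq_sum_normalCoordTerm a b t
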